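/- arXiv:1603.06103 — 2 statements merged into one kernel-verified Lean document; each statement's English description precedes it below -/
import Mathlib

section
/- Let k be a field and φ(x) = p(x)/q(x) ∈ k(x) a rational function of degree d > 1 with p, q coprime polynomials, and suppose the derivative φ' is not identically zero. Let t be transcendental over k. Then for every n ≥ 1, the polynomial p_n(x) − t·q_n(x) ∈ k(t)[x] is separable, where p_n/q_n is the n-th iterate φ^n written in lowest terms. -/
/-!
Since `φ^n` is transcendental over `k`, the substitution `t ↦ φ^n` identifies `k(t)` with the
subfield `k(φ^n)` of `k(x)` and carries `p_n - t q_n` to `p_n - φ^n q_n`, which Mathlib knows to be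
irreducible over `k(φ^n)` with root `x`. So the claim is that `x` is separable over `k(φ^n)`.
For `n = 1` this holds because `φ' ≠ 0` makes the derivative of `p - φ q` nonzero. For the
inductive step consider the tower `k(φ^(n+1)) ⊆ k(φ^(n+1))(φ^n) ⊆ k(x)`: the element `φ^n` is a
root of `p - φ^(n+1) q`, the image of the separable `p - φ q` under `x ↦ φ^n`, and `x` is a root of
the separable `p_n - φ^n q_n`; separability is transitive in towers.
-/

open Polynomial

/-- Composition of rational functions `f ∘ g`, computed via the homogenized
numerator and denominator of `f` (which are coprime) evaluated at `g.num/g.denom`. -/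
noncomputable def ratComp {k : Type*} [Field k] (f g : RatFunc k) : RatFunc k :=
  let p := f.num
  let q := f.denom
  let d := max p.natDegree q.natDegree
  algebraMap (Polynomial k) (RatFunc k)
      (∑ i ∈ Finset.range (d + 1), C (p.coeff i) * g.num ^ i * g.denom ^ (d - i)) /
    algebraMap (Polynomial k) (RatFunc k)
      (∑ i ∈ Finset.range (d + 1), C (q.coeff i) * g.num ^ i * g.denom ^ (d - i))

/-- The `n`-th iterate `φ^n` of a rational function `φ`. -/
noncomputable def ratIter {k : Type*} [Field k] (φ : RatFunc k) : ℕ → RatFunc k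
  | 0 => RatFunc.X
  | n + 1 => ratComp φ (ratIter φ n)

theorem isSeparable_of_map_separable {F E : Type*} [Field F] [Field E] [Algebra F E] {P : F[X]}
    {Q : E[X]} (hPQ : P.map (algebraMap F E) = Q) (hQ : Q.Separable) {x : E}
    (hx : Q.eval x = 0) : IsSeparable F x := by
  subst hPQ
  exact ((separable_map _).mp hQ).of_dvd (minpoly.dvd F x (by rwa [← eval_map_algebraMap]))

section

variable {k : Type*} [Field k]

open IntermediateField algebraAdjoinAdjoin

noncomputable def fiberPoly {L : Type*} [CommRing L] [Algebra k L] (f : RatFunc k) (s : L) :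
    L[X] :=
  f.num.map (algebraMap k L) - C s * f.denom.map (algebraMap k L)

theorem map_fiberPoly {L M : Type*} [CommRing L] [Algebra k L] [CommRing M] [Algebra k M]
    {σ : L →+* M} (hσ : σ.comp (algebraMap k L) = algebraMap k M) (f : RatFunc k) (s : L) :
    (fiberPoly f s).map σ = fiberPoly f (σ s) := by
  simp [fiberPoly, Polynomial.map_map, hσ]

theorem derivative_fiberPoly {L : Type*} [CommRing L] [Algebra k L] (f : RatFunc k) (s : L) :
    derivative (fiberPoly f s) =
      f.num.derivative.map (algebraMap k L) - C s * f.denom.derivative.map (algebraMap k L) := by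
  simp [fiberPoly, derivative_map]

theorem eval_fiberPoly_self (f : RatFunc k) : eval RatFunc.X (fiberPoly f f) = 0 := by
  simp only [fiberPoly, eval_sub, eval_mul, eval_C, eval_map_algebraMap,
    RatFunc.aeval_X_left_eq_algebraMap]
  rw [sub_eq_zero, eq_comm, ← eq_div_iff (RatFunc.algebraMap_ne_zero f.denom_ne_zero),
    RatFunc.num_div_denom]

theorem eval_fiberPoly_algHom {L : Type*} [Field L] [Algebra k L] (σ : RatFunc k →ₐ[k] L)
    (f : RatFunc k) : eval (σ RatFunc.X) (fiberPoly f (σ f)) = 0 := by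
  rw [← RingHom.coe_coe σ, ← map_fiberPoly σ.comp_algebraMap, eval_map, eval₂_hom,
    eval_fiberPoly_self, map_zero]

theorem map_sub_C_mul_map_eq_zero_iff {L : Type*} [Field L] [Algebra k L] {s : L}
    (hs : s ∉ (algebraMap k L).range) {p q : k[X]} :
    p.map (algebraMap k L) - C s * q.map (algebraMap k L) = 0 ↔ p = 0 ∧ q = 0 := by
  refine ⟨fun h => ?_, fun ⟨hp, hq⟩ => by simp [hp, hq]⟩
  have hcoeff (i : ℕ) : algebraMap k L (p.coeff i) = s * algebraMap k L (q.coeff i) := by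
    simpa [sub_eq_zero] using congrArg (coeff · i) h
  have hq : q = 0 := by
    ext i
    by_contra hi
    refine hs ⟨p.coeff i / q.coeff i, ?_⟩
    rw [map_div₀, hcoeff, mul_div_cancel_right₀ _ ((_root_.map_ne_zero _).mpr hi)]
  refine ⟨?_, hq⟩
  ext i
  simpa [hq] using hcoeff i

theorem separable_fiberPoly_self_iff (f : RatFunc k) :
    (fiberPoly f f).Separable ↔ (f.minpolyX k⟮f⟯).Separable := by
  rw [← separable_map (algebraMap k⟮f⟯ (RatFunc k)), RatFunc.minpolyX_map]
  rfl

theorem separable_fiberPoly_self_of_derivative {f : RatFunc k} (hf : ¬∃ c, f = RatFunc.C c)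
    (hd : f.num.derivative ≠ 0 ∨ f.denom.derivative ≠ 0) : (fiberPoly f f).Separable := by
  rw [separable_fiberPoly_self_iff, separable_iff_derivative_ne_zero (f.irreducible_minpolyX hf),
    show f.minpolyX k⟮f⟯ = fiberPoly f (AdjoinSimple.gen k f) from rfl, derivative_fiberPoly,
    Ne, map_sub_C_mul_map_eq_zero_iff]
  · tauto
  · rintro ⟨c, hc⟩
    exact hf ⟨c, (congrArg Subtype.val hc).symm⟩

theorem separable_fiberPoly_self_of_isSeparable {f : RatFunc k} (hf : ¬∃ c, f = RatFunc.C c)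
    (h : IsSeparable k⟮f⟯ (RatFunc.X : RatFunc k)) : (fiberPoly f f).Separable := by
  rw [separable_fiberPoly_self_iff]
  exact h.of_dvd
    ⟨_, (minpoly.eq_of_irreducible (f.irreducible_minpolyX hf) f.minpolyX_aeval_X).symm⟩

theorem algebraMap_homogenize (p : k[X]) (g : RatFunc k) {d : ℕ} (hd : p.natDegree ≤ d) :
    algebraMap k[X] (RatFunc k)
        (∑ i ∈ Finset.range (d + 1), C (p.coeff i) * g.num ^ i * g.denom ^ (d - i)) =
      aeval g p * algebraMap k[X] (RatFunc k) g.denom ^ d := by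
  have hD : algebraMap k[X] (RatFunc k) g.denom ≠ 0 := RatFunc.algebraMap_ne_zero g.denom_ne_zero
  rw [aeval_eq_sum_range' (Nat.lt_succ_of_le hd), Finset.sum_mul, map_sum]
  refine Finset.sum_congr rfl fun i hi => ?_
  obtain ⟨j, rfl⟩ := Nat.exists_eq_add_of_le (Nat.lt_succ_iff.mp (Finset.mem_range.mp hi))
  have hgD : g * algebraMap k[X] (RatFunc k) g.denom = algebraMap k[X] (RatFunc k) g.num :=
    (eq_div_iff hD).mp g.num_div_denom.symm
  rw [Nat.add_sub_cancel_left, Algebra.smul_def, map_mul, map_mul, map_pow, map_pow, ← hgD,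
    RatFunc.algebraMap_C, RatFunc.algebraMap_eq_C]
  ring

theorem ratComp_eq_div (f g : RatFunc k) : ratComp f g = aeval g f.num / aeval g f.denom := by
  have hD : algebraMap k[X] (RatFunc k) g.denom ≠ 0 := RatFunc.algebraMap_ne_zero g.denom_ne_zero
  rw [ratComp, algebraMap_homogenize _ _ (le_max_left _ _),
    algebraMap_homogenize _ _ (le_max_right _ _), mul_div_mul_right _ _ (pow_ne_zero _ hD)]

noncomputable def compAlgHom (g : RatFunc k) (hg : Transcendental k g) :
    RatFunc k →ₐ[k] RatFunc k :=
  (IntermediateField.val _).comp (RatFunc.algEquivOfTranscendental g hg).toAlgHom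

theorem compAlgHom_apply {g : RatFunc k} (hg : Transcendental k g) (f : RatFunc k) :
    compAlgHom g hg f = aeval g f.num / aeval g f.denom := by
  simp [compAlgHom, RatFunc.algEquivOfTranscendental_apply]

theorem compAlgHom_X {g : RatFunc k} (hg : Transcendental k g) :
    compAlgHom g hg RatFunc.X = g := by
  simp [compAlgHom]

theorem ratComp_eq_compAlgHom (f : RatFunc k) {g : RatFunc k} (hg : Transcendental k g) :
    ratComp f g = compAlgHom g hg f := by
  rw [ratComp_eq_div, compAlgHom_apply]

theorem compAlgHom_ne_C {g : RatFunc k} (hg : Transcendental k g) {f : RatFunc k}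
    (hf : ¬∃ c, f = RatFunc.C c) : ¬∃ c, compAlgHom g hg f = RatFunc.C c := by
  rintro ⟨c, hc⟩
  refine hf ⟨c, (compAlgHom g hg).toRingHom.injective ?_⟩
  simpa [← RatFunc.algebraMap_eq_C] using hc

theorem separable_fiberPoly_compAlgHom {φ g : RatFunc k} (hφ : ¬∃ c, φ = RatFunc.C c)
    (hg : Transcendental k g) (hφs : (fiberPoly φ φ).Separable)
    (hgs : (fiberPoly g g).Separable) :
    (fiberPoly (compAlgHom g hg φ) (compAlgHom g hg φ)).Separable := by
  set f := compAlgHom g hg φ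
  have hg_sep : IsSeparable k⟮f⟯ g :=
    isSeparable_of_map_separable (Q := fiberPoly φ f)
      (by rw [map_fiberPoly (k := k) (σ := algebraMap k⟮f⟯ _) rfl, AdjoinSimple.algebraMap_gen])
      (map_fiberPoly (compAlgHom g hg).comp_algebraMap φ φ ▸ hφs.map)
      (by simpa only [compAlgHom_X] using eval_fiberPoly_algHom (compAlgHom g hg) φ)
  have hX_sep : IsSeparable k⟮f⟯⟮g⟯ (RatFunc.X : RatFunc k) :=
    isSeparable_of_map_separable (P := fiberPoly g (AdjoinSimple.gen k⟮f⟯ g))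
      (by rw [map_fiberPoly (k := k) (σ := algebraMap k⟮f⟯⟮g⟯ _) rfl, AdjoinSimple.algebraMap_gen])
      hgs (eval_fiberPoly_self g)
  have : Algebra.IsSeparable k⟮f⟯ k⟮f⟯⟮g⟯ :=
    (isSeparable_adjoin_simple_iff_isSeparable _ _).mpr hg_sep
  exact separable_fiberPoly_self_of_isSeparable (compAlgHom_ne_C _ hφ)
    (hX_sep.of_algebra_isSeparable_of_isSeparable _)

theorem ratIter_succ_eq_compAlgHom (φ : RatFunc k) (n : ℕ) (h : Transcendental k (ratIter φ n)) :
    ratIter φ (n + 1) = compAlgHom _ h φ :=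
  ratComp_eq_compAlgHom φ h

theorem ratIter_ne_C {φ : RatFunc k} (hφ : ¬∃ c, φ = RatFunc.C c) (n : ℕ) :
    ¬∃ c, ratIter φ n = RatFunc.C c := by
  induction n with
  | zero => simp [ratIter, RatFunc.eq_C_iff]
  | succ n ih =>
    rw [ratIter_succ_eq_compAlgHom φ n (RatFunc.transcendental_of_ne_C _ ih)]
    exact compAlgHom_ne_C _ hφ

theorem separable_fiberPoly_ratIter {φ : RatFunc k} (hφ : ¬∃ c, φ = RatFunc.C c)
    (hφs : (fiberPoly φ φ).Separable) (n : ℕ) :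
    (fiberPoly (ratIter φ n) (ratIter φ n)).Separable := by
  induction n with
  | zero => simpa [ratIter, fiberPoly] using separable_X_sub_C
  | succ n ih =>
    have hg := RatFunc.transcendental_of_ne_C _ (ratIter_ne_C hφ n)
    rw [ratIter_succ_eq_compAlgHom φ n hg]
    exact separable_fiberPoly_compAlgHom hφ hg hφs ih

theorem separable_fiberPoly_X_iff {f : RatFunc k} (hf : Transcendental k f) :
    (fiberPoly f (RatFunc.X : RatFunc k)).Separable ↔ (fiberPoly f f).Separable := by
  rw [← separable_map (compAlgHom f hf : RatFunc k →+* RatFunc k),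
    map_fiberPoly (compAlgHom f hf).comp_algebraMap]
  simp only [RingHom.coe_coe, compAlgHom_X]

end

/-- If `φ = p/q` has degree `d > 1` and `φ' ≠ 0`, then for every `n ≥ 1` the
polynomial `p_n(x) - t·q_n(x)` over `k(t)` is separable, where `p_n/q_n` is the
`n`-th iterate `φ^n` in lowest terms (here `t` is `RatFunc.X`). -/
theorem stmt_10 {k : Type*} [Field k] (φ : RatFunc k)
    (hdeg : 1 < max φ.num.natDegree φ.denom.natDegree)
    (hder : φ.denom * φ.num.derivative - φ.num * φ.denom.derivative ≠ 0) :
    ∀ n : ℕ, 1 ≤ n →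
      (((ratIter φ n).num.map (algebraMap k (RatFunc k)) -
          C RatFunc.X * (ratIter φ n).denom.map (algebraMap k (RatFunc k)))).Separable := by
  intro n _
  have hφ : ¬∃ c, φ = RatFunc.C c := by
    rw [RatFunc.eq_C_iff]
    omega
  have hφs : (fiberPoly φ φ).Separable := by
    refine separable_fiberPoly_self_of_derivative hφ ?_
    contrapose! hder
    simp [hder]
  exact (separable_fiberPoly_X_iff (RatFunc.transcendental_of_ne_C _ (ratIter_ne_C hφ n))).mpr
    (separable_fiberPoly_ratIter hφ hφs n)
end

section
/- Fix d ≥ 2 and ε > 0. There exists N such that for every transitive subgroup H of S_d and every σ ∈ S_d such that the coset Hσ (inside the subgroup generated by H and σ) contains at least one fixed-point-free permutation, the N-fold composition of the indicatrix Φ_{Hσ} satisfies Φ_{Hσ}^N(0) > 1 − ε. -/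
/-!
Double counting and transitivity give `∑_{h ∈ H} fix(hσ) = |H|`, i.e. `Φ_{Hσ}'(1) = 1`.
Bernoulli's inequality `x ^ m ≥ 1 + m (x - 1)` then gives `Φ_{Hσ}(x) ≥ x` on `[0, 1]`, strictly
for `x < 1` because the mean number of fixed points is `1` while some `hσ` has none, so some
other `hσ` has at least two. Hence the iterates `Φ_{Hσ}^n(0)` increase to the only fixed point
`1` of `Φ_{Hσ}` in `[0, 1]`; the bound on `N` is uniform since there are finitely many `(H, σ)`.
-/

open Finset Filter Topology Set

theorem tendsto_iterate_of_lt_self {f : ℝ → ℝ} {a b x₀ : ℝ} (hf : Continuous f)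
    (hmaps : MapsTo f (Icc a b) (Icc a b)) (hlt : ∀ x ∈ Ico a b, x < f x) (hb : f b = b)
    (hx₀ : x₀ ∈ Icc a b) : Tendsto (fun n => f^[n] x₀) atTop (𝓝 b) := by
  set u : ℕ → ℝ := fun n => f^[n] x₀
  have hu : ∀ n, u n ∈ Icc a b := fun n => hmaps.iterate n hx₀
  have hstep : ∀ n, u (n + 1) = f (u n) := fun n => Function.iterate_succ_apply' f n x₀
  have hmono : Monotone u := monotone_nat_of_le_succ fun n => by
    rw [hstep]
    rcases (hu n).2.lt_or_eq with hn | hn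
    · exact (hlt _ ⟨(hu n).1, hn⟩).le
    · rw [hn, hb]
  have hbdd : BddAbove (range u) := ⟨b, forall_mem_range.2 fun n => (hu n).2⟩
  have hlim : Tendsto u atTop (𝓝 (⨆ n, u n)) := tendsto_atTop_ciSup hmono hbdd
  have hfix : f (⨆ n, u n) = ⨆ n, u n := isFixedPt_of_tendsto_iterate hlim hf.continuousAt
  have hsup : ⨆ n, u n = b := by
    refine (ciSup_le fun n => (hu n).2).eq_of_not_lt fun hlt' => ?_
    have := hlt _ ⟨(hu 0).1.trans (le_ciSup hbdd 0), hlt'⟩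
    exact this.ne' hfix
  rwa [hsup] at hlim

section MeanPow

variable {ι : Type*} [Fintype ι]

lemma one_add_mul_sub_lt_pow {x : ℝ} (hx₀ : 0 ≤ x) (hx₁ : x < 1) {n : ℕ} (hn : 2 ≤ n) :
    1 + n * (x - 1) < x ^ n := by
  obtain ⟨k, rfl⟩ := Nat.exists_eq_add_of_le' hn
  have hbern := one_add_mul_sub_le_pow (by linarith : (-1 : ℝ) ≤ x) (k + 1)
  have hpow : x ^ (k + 1) < 1 := pow_lt_one₀ hx₀ hx₁ k.succ_ne_zero
  -- `x^(k+2) - 1 - (k+2)(x-1) = (1-x)(1-x^(k+1)) + (x^(k+1) - 1 - (k+1)(x-1))`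
  rw [pow_succ]
  push_cast at hbern ⊢
  nlinarith [mul_pos (sub_pos.2 hx₁) (sub_pos.2 hpow)]

lemma exists_two_le_of_sum_eq_card {m : ι → ℕ} (hsum : ∑ i, m i = Fintype.card ι)
    (hzero : ∃ i, m i = 0) : ∃ i, 2 ≤ m i := by
  by_contra! hlt
  obtain ⟨i, hi⟩ := hzero
  have : ∑ j, m j < ∑ _j : ι, 1 :=
    sum_lt_sum (fun j _ => Nat.le_of_lt_succ (hlt j)) ⟨i, mem_univ _, by omega⟩
  simp [hsum] at this

lemma card_mul_lt_sum_pow {m : ι → ℕ} (hsum : ∑ i, m i ≤ Fintype.card ι)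
    (hzero : ∃ i, m i = 0) {x : ℝ} (hx₀ : 0 ≤ x) (hx₁ : x < 1) :
    Fintype.card ι * x < ∑ i, x ^ m i := by
  have hbern : ∀ i, 1 + m i * (x - 1) ≤ x ^ m i :=
    fun i => one_add_mul_sub_le_pow (by linarith) _
  have hlin : ∑ i, (1 + m i * (x - 1)) = Fintype.card ι + (∑ i, m i : ℕ) * (x - 1) := by
    simp [sum_add_distrib, sum_mul]
  rcases hsum.lt_or_eq with hlt | heq
  · calc Fintype.card ι * x
        < Fintype.card ι + (∑ i, m i : ℕ) * (x - 1) := by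
          have : ((∑ i, m i : ℕ) : ℝ) < Fintype.card ι := by exact_mod_cast hlt
          nlinarith
      _ = ∑ i, (1 + m i * (x - 1)) := hlin.symm
      _ ≤ ∑ i, x ^ m i := sum_le_sum fun i _ => hbern i
  · obtain ⟨j, hj⟩ := exists_two_le_of_sum_eq_card heq hzero
    calc Fintype.card ι * x
        = Fintype.card ι + (∑ i, m i : ℕ) * (x - 1) := by rw [heq]; ring
      _ = ∑ i, (1 + m i * (x - 1)) := hlin.symm
      _ < ∑ i, x ^ m i :=
          sum_lt_sum (fun i _ => hbern i) ⟨j, mem_univ _, one_add_mul_sub_lt_pow hx₀ hx₁ hj⟩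

/-- For `m h` the number of fixed points of `hσ`, `h ∈ H`, this is the indicatrix `Φ_{Hσ}`. -/
noncomputable def meanPow (m : ι → ℕ) (x : ℝ) : ℝ :=
  (1 / (Nat.card ι : ℝ)) * ∑ i, x ^ m i

variable {m : ι → ℕ}

lemma continuous_meanPow : Continuous (meanPow m) := by
  unfold meanPow; fun_prop

lemma meanPow_one [Nonempty ι] : meanPow m 1 = 1 := by
  simp [meanPow, Nat.card_eq_fintype_card]

lemma mapsTo_meanPow [Nonempty ι] : MapsTo (meanPow m) (Icc 0 1) (Icc 0 1) := by
  intro x ⟨hx₀, hx₁⟩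
  refine ⟨by unfold meanPow; positivity, ?_⟩
  rw [← meanPow_one (m := m)]
  unfold meanPow
  gcongr

lemma lt_meanPow (hsum : ∑ i, m i ≤ Fintype.card ι) (hzero : ∃ i, m i = 0) {x : ℝ}
    (hx₀ : 0 ≤ x) (hx₁ : x < 1) : x < meanPow m x := by
  have : Nonempty ι := let ⟨i, _⟩ := hzero; ⟨i⟩
  have hcard : (0 : ℝ) < Fintype.card ι := by exact_mod_cast Fintype.card_pos
  rw [meanPow, Nat.card_eq_fintype_card, one_div, ← div_eq_inv_mul, lt_div_iff₀ hcard, mul_comm]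
  exact card_mul_lt_sum_pow hsum hzero hx₀ hx₁

theorem tendsto_iterate_meanPow_zero (hsum : ∑ i, m i ≤ Fintype.card ι)
    (hzero : ∃ i, m i = 0) : Tendsto (fun n => (meanPow m)^[n] 0) atTop (𝓝 1) :=
  have : Nonempty ι := let ⟨i, _⟩ := hzero; ⟨i⟩
  tendsto_iterate_of_lt_self continuous_meanPow mapsTo_meanPow
    (fun _ hx => lt_meanPow hsum hzero hx.1 hx.2) meanPow_one ⟨le_rfl, zero_le_one⟩

end MeanPow

section CosetFixedPoints

open MulAction

variable {G α : Type*} [Group G] [MulAction G α] [Fintype G] [DecidableEq α]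
  [IsPretransitive G α]

lemma card_filter_smul_eq_independent (a b b' : α) :
    #{g : G | g • a = b} = #{g : G | g • a = b'} := by
  obtain ⟨g₀, rfl⟩ := exists_smul_eq G b' b
  refine card_equiv (Equiv.mulLeft g₀⁻¹) fun g => ?_
  simp [mul_smul, inv_smul_eq_iff]

variable [Fintype α]

lemma card_mul_card_filter_smul_eq (a b : α) :
    Fintype.card α * #{g : G | g • a = b} = Fintype.card G :=
  calc Fintype.card α * #{g : G | g • a = b}
      = ∑ b' : α, #{g : G | g • a = b'} := by
        rw [← smul_eq_mul, ← card_univ, ← sum_const]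
        exact sum_congr rfl fun b' _ => card_filter_smul_eq_independent a b b'
    _ = Fintype.card G :=
        (card_eq_sum_card_fiberwise (f := (· • a)) fun _ _ => mem_univ _).symm

theorem sum_card_fixedPoints_smul_comp [Nonempty α] (σ : α → α) :
    ∑ g : G, #{s | g • σ s = s} = Fintype.card G := by
  refine Nat.eq_of_mul_eq_mul_left (Fintype.card_pos (α := α)) ?_
  calc Fintype.card α * ∑ g : G, #{s | g • σ s = s}
      = Fintype.card α * ∑ s, #{g : G | g • σ s = s} := by
        congr 1
        exact sum_card_bipartiteAbove_eq_sum_card_bipartiteBelow _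
    _ = Fintype.card α * Fintype.card G := by
        rw [mul_sum]
        simp only [card_mul_card_filter_smul_eq, sum_const, card_univ, smul_eq_mul]

end CosetFixedPoints

theorem tendsto_iterate_meanPow_card_fixedPoints {α : Type*} [Fintype α] [DecidableEq α]
    [Nonempty α] (H : Subgroup (Equiv.Perm α)) [Fintype H] [MulAction.IsPretransitive H α]
    (σ : Equiv.Perm α) (hfpf : ∃ h ∈ H, ∀ s, (h * σ) s ≠ s) :
    Tendsto (fun n => (meanPow fun h : H => #{s | (h.1 * σ) s = s})^[n] 0) atTop (𝓝 1) := by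
  refine tendsto_iterate_meanPow_zero (sum_card_fixedPoints_smul_comp (G := H) σ).le ?_
  obtain ⟨h, hH, hh⟩ := hfpf
  exact ⟨⟨h, hH⟩, card_eq_zero.2 (filter_eq_empty_iff.2 fun s _ => hh s)⟩

/-- For `d ≥ 2` and `ε > 0` there is an `N`, uniform over all transitive
subgroups `H ≤ S_d` and all `σ ∈ S_d` such that the coset `Hσ` contains a
fixed-point-free permutation, with `Φ_{Hσ}^N(0) > 1 - ε`, where `Φ_{Hσ}` is the
indicatrix of the coset `Hσ`. -/
theorem stmt_12 (d : ℕ) (hd : 2 ≤ d) (ε : ℝ) (hε : 0 < ε) :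
    ∃ N : ℕ, ∀ (H : Subgroup (Equiv.Perm (Fin d))) (_ : Fintype H)
      (σ : Equiv.Perm (Fin d)),
      (∀ a b : Fin d, ∃ h ∈ H, h a = b) →
      (∃ h ∈ H, ∀ s : Fin d, (h * σ) s ≠ s) →
      1 - ε < (fun x : ℝ => (1 / (Nat.card H : ℝ)) *
          ∑ h : H, x ^ (Finset.univ.filter fun s : Fin d => (h.1 * σ) s = s).card)^[N] 0 := by
  have : Nonempty (Fin d) := ⟨⟨0, by omega⟩⟩
  have hpair : ∀ p : Subgroup (Equiv.Perm (Fin d)) × Equiv.Perm (Fin d), ∀ᶠ N in atTop,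
      ∀ (_ : Fintype p.1), (∀ a b : Fin d, ∃ h ∈ p.1, h a = b) →
        (∃ h ∈ p.1, ∀ s : Fin d, (h * p.2) s ≠ s) →
        1 - ε < (meanPow fun h : p.1 => #{s | (h.1 * p.2) s = s})^[N] 0 := by
    rintro ⟨H, σ⟩
    simp only [eventually_all]
    intro _ htr hfpf
    have : MulAction.IsPretransitive H (Fin d) :=
      ⟨fun a b => let ⟨h, hH, hab⟩ := htr a b; ⟨⟨h, hH⟩, hab⟩⟩
    exact (tendsto_iterate_meanPow_card_fixedPoints H σ hfpf).eventually
      (eventually_gt_nhds (by linarith))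
  obtain ⟨N, hN⟩ := (eventually_all.2 hpair).exists
  exact ⟨N, fun H _ σ => hN (H, σ) _⟩
end
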